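/- arXiv:2410.06763 — 2 statements merged into one kernel-verified Lean document; each statement's English description precedes it below -/
import Mathlib

section
/- Lagrange interpolation bound: let P be a complex polynomial of degree at most 2N+2 and let z_0 < z_1 < ... < z_{2N+2} be equally spaced real points with spacing h > 0. Then for any real z ∈ [z_N, z_{N+1}], |P(z)| ≤ Σ_{k=0}^{2N+2} |P(z_k)| · ∏_{l≠k} |z − z_l| / |z_k − z_l|, and each factor ∏_{l≠k}|z−z_l|/|z_k−z_l| is at most ((N+1)!)²/(N!(N+1)!) ≤ N+1. -/
open Finset

lemma aux_prod_sub (k : ℕ) : ∏ l ∈ range k, (k - l) = k.factorial := by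
  induction k with
  | zero => simp
  | succ k ih =>
    rw [Finset.prod_range_succ' (fun l => k + 1 - l) k]
    simp only [Nat.succ_sub_succ]
    rw [ih, Nat.factorial_succ, mul_comm]
    simp

lemma aux_prod_Ico (a M : ℕ) : ∏ l ∈ Ico (a+1) M, (l - a) = (M - a - 1).factorial := by
  rw [Finset.prod_Ico_eq_prod_range]
  have e : ∀ j, (a + 1 + j - a) = j + 1 := by omega
  simp only [e]
  rw [Finset.prod_range_add_one_eq_factorial]
  congr 1

lemma aux_key (N : ℕ) : ∀ d, d ≤ N → N.factorial * (N+2).factorial ≤ (d+1) * ((N-d).factorial * (N+2+d).factorial) := by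
  intro d
  induction d with
  | zero => simp
  | succ d ih =>
    intro hd
    have h1 : d ≤ N := by omega
    calc N.factorial * (N+2).factorial ≤ (d+1) * ((N-d).factorial * (N+2+d).factorial) := ih h1
      _ ≤ (d+1+1) * ((N-(d+1)).factorial * (N+2+(d+1)).factorial) := by
          have e1 : (N - d).factorial = (N - d) * (N - (d+1)).factorial := by
            have e : N - d = (N - (d+1)) + 1 := by omega
            rw [e, Nat.factorial_succ]
          have e2 : (N+2+(d+1)).factorial = (N+3+d) * (N+2+d).factorial := by
            have e : N+2+(d+1) = (N+2+d)+1 := by omega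
            rw [e, Nat.factorial_succ]
            congr 1
            omega
          rw [e1, e2]
          have r1 : (d+1) * ((N-d) * (N - (d+1)).factorial * (N+2+d).factorial)
              = ((d+1)*(N-d)) * ((N - (d+1)).factorial * (N+2+d).factorial) := by ring
          have r2 : (d+1+1) * ((N-(d+1)).factorial * ((N+3+d) * (N+2+d).factorial))
              = ((d+2)*(N+3+d)) * ((N - (d+1)).factorial * (N+2+d).factorial) := by ring
          rw [r1, r2]
          apply Nat.mul_le_mul_right
          apply Nat.mul_le_mul <;> omega

lemma aux_ineq (N k : ℕ) (hk : k < 2*N+3) (hne : k ≠ N+1) :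
    (N+1).factorial * (N+2).factorial ≤
      (N+1) * ((if k ≤ N then N+1-k else k-N) * (k.factorial * (2*N+2-k).factorial)) := by
  have hNf : (N+1).factorial = (N+1) * N.factorial := Nat.factorial_succ N
  by_cases hkN : k ≤ N
  · have h := aux_key N (N-k) (by omega)
    have e1 : N - (N-k) = k := by omega
    have e2 : N+2+(N-k) = 2*N+2-k := by omega
    have e3 : N-k+1 = N+1-k := by omega
    rw [e1, e2, e3] at h
    rw [if_pos hkN]
    calc (N+1).factorial * (N+2).factorial
        = (N+1) * (N.factorial * (N+2).factorial) := by rw [hNf]; ring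
      _ ≤ (N+1) * ((N+1-k) * (k.factorial * (2*N+2-k).factorial)) := Nat.mul_le_mul_left _ h
  · have h := aux_key N (k-N-2) (by omega)
    have e1 : N - (k-N-2) = 2*N+2-k := by omega
    have e2 : N+2+(k-N-2) = k := by omega
    rw [e1, e2] at h
    rw [if_neg hkN]
    calc (N+1).factorial * (N+2).factorial
        = (N+1) * (N.factorial * (N+2).factorial) := by rw [hNf]; ring
      _ ≤ (N+1) * ((k-N-2+1) * ((2*N+2-k).factorial * k.factorial)) := Nat.mul_le_mul_left _ h
      _ ≤ (N+1) * ((k-N) * (k.factorial * (2*N+2-k).factorial)) := by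
          apply Nat.mul_le_mul_left
          rw [mul_comm (2*N+2-k).factorial]
          exact Nat.mul_le_mul_right _ (by omega)

lemma aux_denom (M k : ℕ) (hk : k < M) :
    ∏ l ∈ (range M).erase k, |(k:ℝ) - l| = ((k.factorial * (M-1-k).factorial : ℕ) : ℝ) := by
  have hsplit : (range M).erase k = range k ∪ Ico (k+1) M := by
    ext l
    simp only [Finset.mem_erase, Finset.mem_range, Finset.mem_union, Finset.mem_Ico]
    omega
  have hdisj : Disjoint (range k) (Ico (k+1) M) := by
    simp only [Finset.disjoint_left, Finset.mem_range, Finset.mem_Ico]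
    omega
  rw [hsplit, Finset.prod_union hdisj]
  have h1 : ∏ l ∈ range k, |(k:ℝ) - l| = ((k.factorial : ℕ) : ℝ) := by
    rw [← aux_prod_sub k, Nat.cast_prod]
    apply Finset.prod_congr rfl
    intro l hl
    have hl' := Finset.mem_range.1 hl
    rw [Nat.cast_sub hl'.le, abs_of_nonneg]
    have : (l:ℝ) ≤ k := by exact_mod_cast hl'.le
    linarith
  have h2 : ∏ l ∈ Ico (k+1) M, |(k:ℝ) - l| = (((M-1-k).factorial : ℕ) : ℝ) := by
    have e : M - k - 1 = M - 1 - k := by omega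
    rw [← e, ← aux_prod_Ico k M, Nat.cast_prod]
    apply Finset.prod_congr rfl
    intro l hl
    have hl' := (Finset.mem_Ico.1 hl).1
    rw [abs_sub_comm, Nat.cast_sub (by omega), abs_of_nonneg]
    have : (k:ℝ) ≤ l := by exact_mod_cast (by omega : k ≤ l)
    linarith
  rw [h1, h2]
  push_cast
  ring

lemma aux_prodB (N : ℕ) :
    ∏ l ∈ range (2*N+3), (if l ≤ N then N+1-l else l-N) = (N+1).factorial * (N+2).factorial := by
  have hsplit : range (2*N+3) = range (N+1) ∪ Ico (N+1) (2*N+3) := by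
    ext l
    simp only [Finset.mem_range, Finset.mem_union, Finset.mem_Ico]
    omega
  have hdisj : Disjoint (range (N+1)) (Ico (N+1) (2*N+3)) := by
    simp only [Finset.disjoint_left, Finset.mem_range, Finset.mem_Ico]
    omega
  rw [hsplit, Finset.prod_union hdisj]
  have h1 : ∏ l ∈ range (N+1), (if l ≤ N then N+1-l else l-N) = (N+1).factorial := by
    rw [← aux_prod_sub (N+1)]
    apply Finset.prod_congr rfl
    intro l hl
    have hl' := Finset.mem_range.1 hl
    rw [if_pos (by omega : l ≤ N)]
  have h2 : ∏ l ∈ Ico (N+1) (2*N+3), (if l ≤ N then N+1-l else l-N) = (N+2).factorial := by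
    have := aux_prod_Ico N (2*N+3)
    have e : 2*N+3-N-1 = N+2 := by omega
    rw [e] at this
    rw [← this]
    apply Finset.prod_congr rfl
    intro l hl
    have hl' := (Finset.mem_Ico.1 hl).1
    rw [if_neg (by omega : ¬ l ≤ N)]
  rw [h1, h2]
lemma aux_absle (N : ℕ) (r : ℝ) (hr1 : (N:ℝ) ≤ r) (hr2 : r ≤ (N:ℝ)+1) (l : ℕ) :
    |r - l| ≤ (((if l ≤ N then N+1-l else l-N : ℕ)) : ℝ) := by
  by_cases hl : l ≤ N
  · rw [if_pos hl, Nat.cast_sub (by omega), abs_le]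
    have : (l:ℝ) ≤ N := by exact_mod_cast hl
    push_cast
    constructor <;> linarith
  · rw [if_neg hl, Nat.cast_sub (by omega), abs_le]
    have : (N:ℝ)+1 ≤ l := by exact_mod_cast (by omega : N+1 ≤ l)
    constructor <;> linarith

lemma aux_main (N k : ℕ) (hk : k ∈ range (2*N+3)) (r : ℝ)
    (hr1 : (N:ℝ) ≤ r) (hr2 : r ≤ (N:ℝ)+1) :
    ∏ l ∈ (range (2*N+3)).erase k, |r - l| / |(k:ℝ) - l| ≤ (N:ℝ)+1 := by
  have hk' := Finset.mem_range.1 hk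
  have e23 : 2*N+3-1-k = 2*N+2-k := by omega
  rw [Finset.prod_div_distrib, aux_denom (2*N+3) k hk', e23]
  have hD : (0:ℝ) < ((k.factorial * (2*N+2-k).factorial : ℕ) : ℝ) := by
    exact_mod_cast Nat.mul_pos k.factorial_pos (2*N+2-k).factorial_pos
  rw [div_le_iff₀ hD]
  set b : ℕ → ℕ := fun l => if l ≤ N then N+1-l else l-N with hbdef
  by_cases hmid : k = N+1
  · -- middle node
    subst hmid
    have hN : N ∈ (range (2*N+3)).erase (N+1) := by
      simp only [Finset.mem_erase, Finset.mem_range]; omega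
    have h22 : 2*N+2 ∈ ((range (2*N+3)).erase (N+1)).erase N := by
      simp only [Finset.mem_erase, Finset.mem_range]; omega
    rw [← Finset.mul_prod_erase _ _ hN, ← Finset.mul_prod_erase _ _ h22]
    set E2 := (((range (2*N+3)).erase (N+1)).erase N).erase (2*N+2) with hE2
    -- compute nat product over E2
    have hnat : (N+2) * ∏ l ∈ E2, b l = (N+1).factorial * (N+2).factorial := by
      have h3 : b (2*N+2) * ∏ l ∈ E2, b l = ∏ l ∈ ((range (2*N+3)).erase (N+1)).erase N, b l :=
        Finset.mul_prod_erase _ _ h22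
      have h2 : b N * ∏ l ∈ ((range (2*N+3)).erase (N+1)).erase N, b l
          = ∏ l ∈ (range (2*N+3)).erase (N+1), b l := Finset.mul_prod_erase _ _ hN
      have h1 : b (N+1) * ∏ l ∈ (range (2*N+3)).erase (N+1), b l
          = ∏ l ∈ range (2*N+3), b l :=
        Finset.mul_prod_erase _ _ (by simp only [Finset.mem_range]; omega)
      have hb1 : b (N+1) = 1 := by simp only [hbdef]; rw [if_neg (by omega)]; omega
      have hb2 : b N = 1 := by simp only [hbdef]; rw [if_pos (by omega)]; omega
      have hb3 : b (2*N+2) = N+2 := by simp only [hbdef]; rw [if_neg (by omega)]; omega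
      have := aux_prodB N
      rw [hb3] at h3
      rw [hb2, one_mul] at h2
      rw [hb1, one_mul] at h1
      rw [h3, h2, h1]
      exact this
    have hE2nat : ∏ l ∈ E2, b l = (N+1).factorial * (N+1).factorial := by
      have hf : (N+2).factorial = (N+2) * (N+1).factorial := Nat.factorial_succ (N+1)
      apply Nat.eq_of_mul_eq_mul_left (show 0 < N+2 by omega)
      rw [hnat, hf]; ring
    have hprod2 : ∏ l ∈ E2, |r - l| ≤ ((N+1).factorial * (N+1).factorial : ℕ) := by
      calc ∏ l ∈ E2, |r - l| ≤ ∏ l ∈ E2, ((b l : ℕ) : ℝ) := by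
            apply Finset.prod_le_prod (fun l _ => abs_nonneg _)
            intro l _
            exact aux_absle N r hr1 hr2 l
        _ = ((∏ l ∈ E2, b l : ℕ) : ℝ) := by rw [Nat.cast_prod]
        _ = (((N+1).factorial * (N+1).factorial : ℕ) : ℝ) := by rw [hE2nat]
    have habs1 : |r - (N:ℝ)| = r - N := abs_of_nonneg (by linarith)
    have habs2 : |r - ((2*N+2 : ℕ):ℝ)| = (2*N+2 : ℕ) - r := by
      rw [abs_sub_comm]
      apply abs_of_nonneg
      push_cast
      linarith
    have hfin : (r - N) * (((2*N+2:ℕ):ℝ) - r) ≤ (N:ℝ)+1 := by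
      push_cast
      nlinarith [mul_nonneg (by linarith : (0:ℝ) ≤ (N:ℝ)+1-r) (by linarith : (0:ℝ) ≤ r - N)]
    have e2 : 2*N+2-(N+1) = N+1 := by omega
    rw [e2]
    calc |r - (N:ℝ)| * (|r - ((2*N+2:ℕ):ℝ)| * ∏ l ∈ E2, |r - l|)
        ≤ |r - (N:ℝ)| * (|r - ((2*N+2:ℕ):ℝ)| * ((N+1).factorial * (N+1).factorial : ℕ)) := by
          apply mul_le_mul_of_nonneg_left _ (abs_nonneg _)
          apply mul_le_mul_of_nonneg_left hprod2 (abs_nonneg _)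
      _ = ((r - N) * (((2*N+2:ℕ):ℝ) - r)) * (((N+1).factorial * (N+1).factorial : ℕ) : ℝ) := by
          rw [habs1, habs2]; ring
      _ ≤ ((N:ℝ)+1) * (((N+1).factorial * (N+1).factorial : ℕ) : ℝ) := by
          apply mul_le_mul_of_nonneg_right hfin
          positivity
  · -- other nodes
    have hbk : 0 < b k := by
      simp only [hbdef]
      by_cases hkN : k ≤ N
      · rw [if_pos hkN]; omega
      · rw [if_neg hkN]; omega
    have hnum : ∏ l ∈ (range (2*N+3)).erase k, |r - l| ≤ ((∏ l ∈ (range (2*N+3)).erase k, b l : ℕ) : ℝ) := by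
      rw [Nat.cast_prod]
      apply Finset.prod_le_prod (fun l _ => abs_nonneg _)
      intro l _
      exact aux_absle N r hr1 hr2 l
    have hnat : ∏ l ∈ (range (2*N+3)).erase k, b l ≤ (N+1) * (k.factorial * (2*N+2-k).factorial) := by
      apply Nat.le_of_mul_le_mul_left _ hbk
      rw [Finset.mul_prod_erase _ _ hk, aux_prodB N]
      calc (N+1).factorial * (N+2).factorial
          ≤ (N+1) * (b k * (k.factorial * (2*N+2-k).factorial)) := aux_ineq N k hk' hmid
        _ = b k * ((N+1) * (k.factorial * (2*N+2-k).factorial)) := by ring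
    calc ∏ l ∈ (range (2*N+3)).erase k, |r - l|
        ≤ ((∏ l ∈ (range (2*N+3)).erase k, b l : ℕ) : ℝ) := hnum
      _ ≤ (((N+1) * (k.factorial * (2*N+2-k).factorial) : ℕ) : ℝ) := by exact_mod_cast hnat
      _ = ((N:ℝ)+1) * ((k.factorial * (2*N+2-k).factorial : ℕ) : ℝ) := by push_cast; ring

lemma aux_part1 (M : ℕ) (P : Polynomial ℂ) (hdeg : P.natDegree < M)
    (w : ℕ → ℝ) (hw : Set.InjOn (fun k : ℕ => ((w k : ℝ) : ℂ)) (range M)) (z : ℝ) :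
    ‖P.eval (z:ℂ)‖ ≤ ∑ k ∈ range M, ‖P.eval ((w k : ℝ):ℂ)‖ *
      ∏ l ∈ (range M).erase k, |z - w l| / |w k - w l| := by
  set v : ℕ → ℂ := fun k => ((w k : ℝ):ℂ) with hv
  have hdlt : P.degree < (#(range M) : WithBot ℕ) := by
    rw [Finset.card_range]
    exact lt_of_le_of_lt Polynomial.degree_le_natDegree (by exact_mod_cast hdeg)
  have key := Lagrange.eq_interpolate hw hdlt
  have hev : P.eval (z:ℂ) = ∑ k ∈ range M, P.eval (v k) * (Lagrange.basis (range M) v k).eval (z:ℂ) := by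
    conv_lhs => rw [key]
    rw [Lagrange.interpolate_apply, Polynomial.eval_finset_sum]
    apply Finset.sum_congr rfl
    intro k _
    rw [Polynomial.eval_mul, Polynomial.eval_C]
  have hbasis : ∀ k, ‖(Lagrange.basis (range M) v k).eval (z:ℂ)‖
      = ∏ l ∈ (range M).erase k, |z - w l| / |w k - w l| := by
    intro k
    rw [Lagrange.basis, Polynomial.eval_prod, norm_prod]
    apply Finset.prod_congr rfl
    intro l _
    rw [Lagrange.basisDivisor]
    rw [Polynomial.eval_mul, Polynomial.eval_C, Polynomial.eval_sub, Polynomial.eval_X,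
      Polynomial.eval_C, norm_mul, norm_inv]
    have e1 : v k - v l = ((w k - w l : ℝ):ℂ) := by simp [hv]
    have e2 : (z:ℂ) - v l = ((z - w l : ℝ):ℂ) := by simp [hv]
    rw [e1, e2, Complex.norm_real, Complex.norm_real, Real.norm_eq_abs, Real.norm_eq_abs, div_eq_mul_inv, mul_comm]
  calc ‖P.eval (z:ℂ)‖
      ≤ ∑ k ∈ range M, ‖P.eval (v k) * (Lagrange.basis (range M) v k).eval (z:ℂ)‖ := by
        rw [hev]; exact norm_sum_le _ _
    _ = ∑ k ∈ range M, ‖P.eval ((w k : ℝ):ℂ)‖ *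
        ∏ l ∈ (range M).erase k, |z - w l| / |w k - w l| := by
        apply Finset.sum_congr rfl
        intro k _
        rw [norm_mul, hbasis k]

/-- Lagrange interpolation bound at equally spaced nodes: for a polynomial `P` of degree
at most `2N+2` and equally spaced real nodes `z_k = z₀ + k·h`, and any `z ∈ [z_N, z_{N+1}]`,
`|P(z)| ≤ Σ_k |P(z_k)| ∏_{l≠k} |z - z_l|/|z_k - z_l|`, and each Lagrange factor
`∏_{l≠k} |z - z_l|/|z_k - z_l|` is at most `N + 1`. -/
theorem lagrange_interpolation_bound (N : ℕ) (P : Polynomial ℂ)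
    (hdeg : P.natDegree ≤ 2 * N + 2) (z₀ h : ℝ) (hh : 0 < h)
    (zk : ℕ → ℝ) (hzk : ∀ k, zk k = z₀ + k * h)
    (z : ℝ) (hz : z ∈ Set.Icc (zk N) (zk (N + 1))) :
    ‖P.eval (z : ℂ)‖ ≤
      ∑ k ∈ Finset.range (2 * N + 3), ‖P.eval ((zk k : ℝ) : ℂ)‖ *
        ∏ l ∈ (Finset.range (2 * N + 3)).erase k, |z - zk l| / |zk k - zk l| ∧
    ∀ k ∈ Finset.range (2 * N + 3),
      (∏ l ∈ (Finset.range (2 * N + 3)).erase k, |z - zk l| / |zk k - zk l|) ≤ N + 1 := by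
  obtain ⟨hz1, hz2⟩ := hz
  constructor
  · -- Part 1
    apply aux_part1 (2*N+3) P (by omega) zk _ z
    intro a ha b hb hab
    simp only [Complex.ofReal_inj] at hab
    rw [hzk a, hzk b] at hab
    have : (a:ℝ) = (b:ℝ) := by
      have := mul_right_cancel₀ (ne_of_gt hh) (by linarith : (a:ℝ) * h = (b:ℝ) * h)
      exact this
    exact_mod_cast this
  · -- Part 2
    intro k hk
    set r : ℝ := (z - z₀) / h with hrdef
    have hhr : h * r = z - z₀ := by
      rw [hrdef, mul_div_cancel₀]
      exact ne_of_gt hh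
    have hr1 : (N:ℝ) ≤ r := by
      rw [hrdef, le_div_iff₀ hh]
      rw [hzk N] at hz1
      linarith
    have hr2 : r ≤ (N:ℝ)+1 := by
      rw [hrdef, div_le_iff₀ hh]
      rw [hzk (N+1)] at hz2
      push_cast at hz2 ⊢
      linarith
    have hfac : ∀ l, |z - zk l| / |zk k - zk l| = |r - l| / |(k:ℝ) - l| := by
      intro l
      have e1 : z - zk l = h * (r - l) := by rw [hzk l]; linear_combination -hhr
      have e2 : zk k - zk l = h * ((k:ℝ) - l) := by rw [hzk k, hzk l]; ring
      rw [e1, e2, abs_mul, abs_mul]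
      exact mul_div_mul_left _ _ (by positivity)
    calc ∏ l ∈ (Finset.range (2 * N + 3)).erase k, |z - zk l| / |zk k - zk l|
        = ∏ l ∈ (Finset.range (2 * N + 3)).erase k, |r - l| / |(k:ℝ) - l| := by
          exact Finset.prod_congr rfl (fun l _ => hfac l)
      _ ≤ (N:ℝ)+1 := aux_main N k hk r hr1 hr2
end

section
/- If h is subharmonic on the open unit disk 𝔻, h ≤ 0 on the interval (0,1) ⊂ ℝ, and h is subharmonic at 0, then h(0) ≤ 0. -/
/-!
Ransford's barrier argument. Fix `ε > 0`, `0 < ρ < 1` and `δ > 0`, and slit the disc `|z| ≤ ρ`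
along `[δ, ρ]`, where `h ≤ 0`. The function `w = Re √(δ - z)` is nonnegative and harmonic off
the slit, and on the circle `|z| = ρ` it is bounded below, independently of `δ`, away from the
point `ρ`, near which `h < ε` by upper semicontinuity. So `h ≤ ε + c w` on the boundary of the
slit disc, and the maximum principle (made strict by adding a small multiple of `|z|²`) gives
`h 0 ≤ 2ε + c √δ`. Let `δ → 0`, then `ε → 0`.
-/

open Metric

/-- A function is subharmonic on a set if it is upper semicontinuous there and satisfies
the sub-mean value inequality on small circles. -/
def SubharmonicOn (h : ℂ → ℝ) (s : Set ℂ) : Prop :=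
  UpperSemicontinuousOn h s ∧ ∀ z ∈ s, ∀ᶠ (r : ℝ) in nhdsWithin (0 : ℝ) (Set.Ioi (0 : ℝ)),
    h z ≤ (2 * Real.pi)⁻¹ *
      ∫ θ in (0:ℝ)..(2 * Real.pi),
        h (z + Complex.ofReal r * Complex.exp (Complex.ofReal θ * Complex.I))

open Complex Filter Topology ComplexConjugate Real InnerProductSpace

theorem circleAverage_normSq (c : ℂ) (r : ℝ) :
    circleAverage (fun z ↦ normSq z) c r = normSq c + r ^ 2 := by
  have hsphere : Set.EqOn (fun z ↦ normSq z)
      (fun z ↦ ((normSq c + r ^ 2 : ℝ) + 2 * (conj c * (z - c)) : ℂ).re) (sphere c |r|) := by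
    intro z hz
    have hr : normSq (z - c) = r ^ 2 := by
      rw [normSq_eq_norm_sq, mem_sphere_iff_norm.mp hz, sq_abs]
    have := normSq_add c (z - c)
    simp only [add_sub_cancel] at this
    simp only [this, hr, add_re, ofReal_re, mul_re, re_ofNat, im_ofNat, conj_re, conj_im,
      sub_re, sub_im, mul_im]
    ring
  have hharm : HarmonicOnNhd
      (fun z ↦ ((normSq c + r ^ 2 : ℝ) + 2 * (conj c * (z - c)) : ℂ).re) (closedBall c |r|) :=
    fun z _ ↦ AnalyticAt.harmonicAt_re (by fun_prop)
  rw [circleAverage_congr_sphere hsphere, hharm.circleAverage_eq]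
  simp [-ofReal_pow]

theorem circleAverage_sub_mul_normSq {H : ℂ → ℝ} {c : ℂ} {r : ℝ}
    (hH : HarmonicOnNhd H (closedBall c |r|)) (η : ℝ) :
    circleAverage (fun z ↦ H z - η * normSq z) c r = H c - η * (normSq c + r ^ 2) := by
  have hHint : CircleIntegrable H c r :=
    (hH.continuousOn.mono sphere_subset_closedBall).circleIntegrable'
  have hqint : CircleIntegrable (fun z ↦ η * normSq z) c r :=
    (by fun_prop : Continuous fun z ↦ η * normSq z).continuousOn.circleIntegrable'
  rw [circleAverage_fun_sub hHint hqint, hH.circleAverage_eq, ← circleAverage_normSq]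
  exact congrArg (H c - ·) (circleAverage_fun_smul (a := η) (f := fun z ↦ normSq z))

theorem not_circleIntegrable_of_forall_sphere_sub_le {h b : ℂ → ℝ} {c : ℂ} {r : ℝ}
    (hsub : h c ≤ circleAverage h c r) (hb : CircleIntegrable b c r)
    (hb_lt : circleAverage b c r < b c)
    (hmax : ∀ z ∈ sphere c |r|, h z - b z ≤ h c - b c) : ¬CircleIntegrable h c r := by
  intro hh
  have hconst := circleIntegrable_const (h c - b c) c r
  have : circleAverage h c r ≤ circleAverage (fun z ↦ b z + (h c - b c)) c r :=
    circleAverage_mono hh (hb.add hconst) fun z hz ↦ by linarith [hmax z hz]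
  rw [circleAverage_fun_add hb hconst, circleAverage_const] at this
  linarith

-- `hb_nonneg` covers the points where `h` is not circle integrable: its circle average is then
-- the junk value `0`, so the sub-mean inequality only says `h z ≤ 0`.
theorem le_of_forall_mem_sdiff_le {h b : ℂ → ℝ} {K U : Set ℂ} (hK : IsCompact K) (hU : IsOpen U)
    (hUK : U ⊆ K) (husc : UpperSemicontinuousOn h K) (hb_cont : ContinuousOn b K)
    (hsub : ∀ z ∈ U, ∀ᶠ r in 𝓝[>] 0, h z ≤ circleAverage h z r)
    (hb : ∀ z ∈ U, ∀ᶠ r in 𝓝[>] 0, CircleIntegrable b z r ∧ circleAverage b z r < b z)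
    (hb_nonneg : ∀ z ∈ U, 0 ≤ b z) (hbdry : ∀ z ∈ K \ U, h z ≤ b z) :
    ∀ z ∈ K, h z ≤ b z := by
  intro z hz
  obtain ⟨c, hcK, hmax⟩ :=
    (husc.add hb_cont.neg.upperSemicontinuousOn).exists_isMaxOn ⟨z, hz⟩ hK
  replace hmax : ∀ z ∈ K, h z - b z ≤ h c - b c := fun z hz ↦ by
    simpa [sub_eq_add_neg] using isMaxOn_iff.mp hmax z hz
  suffices h c ≤ b c by linarith [hmax z hz]
  by_cases hcU : c ∈ U
  swap
  · exact hbdry c ⟨hcK, hcU⟩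
  have hball : ∀ᶠ r in 𝓝[>] 0, closedBall c r ⊆ U :=
    nhdsWithin_le_nhds (eventually_closedBall_subset (hU.mem_nhds hcU))
  obtain ⟨r, ⟨hr, hsubr, hbint, hblt⟩, hballr⟩ :=
    ((eventually_mem_nhdsWithin.and ((hsub c hcU).and (hb c hcU))).and hball).exists
  have hnot : ¬CircleIntegrable h c r :=
    not_circleIntegrable_of_forall_sphere_sub_le hsubr hbint hblt fun z hz ↦
      hmax z (hUK (hballr (sphere_subset_closedBall (by rwa [abs_of_pos hr] at hz))))
  rw [circleAverage.integral_undef hnot] at hsubr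
  linarith [hb_nonneg c hcU]

noncomputable def slitBarrier (δ : ℝ) (z : ℂ) : ℝ := (Complex.sqrt (δ - z)).re

theorem slitBarrier_eq_sqrt (δ : ℝ) (z : ℂ) :
    slitBarrier δ z = √((‖(δ : ℂ) - z‖ + (δ - z.re)) / 2) := by
  simp [slitBarrier, Complex.sqrt, cpow_inv_two_re]

theorem continuous_slitBarrier (δ : ℝ) : Continuous (slitBarrier δ) := by
  simp_rw [funext (slitBarrier_eq_sqrt δ)]
  fun_prop

theorem slitBarrier_nonneg (δ : ℝ) (z : ℂ) : 0 ≤ slitBarrier δ z := by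
  rw [slitBarrier_eq_sqrt]
  positivity

theorem slitBarrier_apply_zero (δ : ℝ) : slitBarrier δ 0 = √δ := by
  simp [slitBarrier, re_sqrt_ofReal]

theorem harmonicAt_slitBarrier {δ : ℝ} {z : ℂ} (hz : (δ : ℂ) - z ∈ slitPlane) :
    HarmonicAt (slitBarrier δ) z := by
  have hopen : IsOpen {w : ℂ | (δ : ℂ) - w ∈ slitPlane} :=
    isOpen_slitPlane.preimage (by fun_prop)
  have hdiff : DifferentiableOn ℂ (fun w ↦ Complex.sqrt (δ - w)) {w | (δ : ℂ) - w ∈ slitPlane} :=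
    fun w hw ↦ ((differentiableAt_sqrt hw).comp w (by fun_prop)).differentiableWithinAt
  exact (hdiff.analyticAt (hopen.mem_nhds hz)).harmonicAt_re

theorem norm_sub_div_le_slitBarrier {δ ρ : ℝ} {z : ℂ} (hδ : 0 ≤ δ) (hz : ‖z‖ = ρ) :
    ‖z - ρ‖ / (2 * √ρ) ≤ slitBarrier δ z := by
  have hρ : 0 ≤ ρ := hz ▸ norm_nonneg z
  have hsq : ‖z - ρ‖ ^ 2 = 2 * ρ * (ρ - z.re) := by
    have : ρ ^ 2 = z.re ^ 2 + z.im ^ 2 := by rw [← hz, ← normSq_eq_norm_sq, normSq_apply]; ring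
    rw [← normSq_eq_norm_sq, normSq_apply]
    simp only [sub_re, ofReal_re, sub_im, ofReal_im, sub_zero]
    linear_combination -this
  have htri : ρ - δ ≤ ‖(δ : ℂ) - z‖ := by
    have := norm_sub_norm_le z (δ : ℂ)
    rw [norm_sub_rev, norm_real, Real.norm_eq_abs, abs_of_nonneg hδ, hz] at this
    linarith
  have hnonneg : 0 ≤ ‖(δ : ℂ) - z‖ + (δ - z.re) := by
    have := neg_le_of_abs_le (abs_re_le_norm ((δ : ℂ) - z))
    simp only [sub_re, ofReal_re] at this
    linarith
  rw [slitBarrier_eq_sqrt, Real.le_sqrt (by positivity) (by positivity),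
    div_pow, mul_pow, sq_sqrt hρ, hsq]
  rcases hρ.eq_or_lt with rfl | hρ
  · simp only [mul_zero, zero_mul, zero_div]
    positivity
  rw [div_le_div_iff₀ (by positivity) (by norm_num)]
  nlinarith

theorem eventually_circleAverage_slitBarrier_lt {δ a c η : ℝ} {z : ℂ} (hη : 0 < η)
    (hz : (δ : ℂ) - z ∈ slitPlane) :
    ∀ᶠ r in 𝓝[>] 0,
      CircleIntegrable (fun w ↦ a + c * slitBarrier δ w - η * normSq w) z r ∧
      circleAverage (fun w ↦ a + c * slitBarrier δ w - η * normSq w) z r <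
        a + c * slitBarrier δ z - η * normSq z := by
  have hopen : IsOpen {w : ℂ | (δ : ℂ) - w ∈ slitPlane} :=
    isOpen_slitPlane.preimage (by fun_prop)
  have hcont : Continuous fun w ↦ a + c * slitBarrier δ w - η * normSq w := by
    have := continuous_slitBarrier δ
    fun_prop
  filter_upwards [eventually_mem_nhdsWithin,
    nhdsWithin_le_nhds (eventually_closedBall_subset (hopen.mem_nhds hz))]
    with r (hr : 0 < r) hball
  refine ⟨hcont.continuousOn.circleIntegrable', ?_⟩
  have hharm : HarmonicOnNhd (fun w ↦ a + c * slitBarrier δ w) (closedBall z |r|) :=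
    fun w hw ↦ (harmonicAt_const a).add
      (harmonicAt_slitBarrier (hball (abs_of_pos hr ▸ hw))).const_smul
  rw [circleAverage_sub_mul_normSq hharm]
  nlinarith [pow_pos hr 2]

theorem le_of_forall_sphere_le_slitBarrier {h : ℂ → ℝ} {ρ ε c δ : ℝ} (hρ : 0 < ρ) (hε : 0 < ε)
    (hc : 0 ≤ c) (husc : UpperSemicontinuousOn h (closedBall 0 ρ))
    (hsub : ∀ z ∈ ball (0 : ℂ) ρ, ∀ᶠ r in 𝓝[>] 0, h z ≤ circleAverage h z r)
    (hseg : ∀ t ∈ Set.Icc δ ρ, h t ≤ 0)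
    (hsphere : ∀ z ∈ sphere (0 : ℂ) ρ, h z ≤ ε + c * slitBarrier δ z) :
    h 0 ≤ 2 * ε + c * √δ := by
  set b : ℂ → ℝ := fun w ↦ 2 * ε + c * slitBarrier δ w - ε / ρ ^ 2 * normSq w
  have hb_ge : ∀ z ∈ closedBall (0 : ℂ) ρ, ε + c * slitBarrier δ z ≤ b z := by
    intro z hz
    have : normSq z ≤ ρ ^ 2 := by
      rw [normSq_eq_norm_sq]
      exact pow_le_pow_left₀ (norm_nonneg z) (mem_closedBall_zero_iff.mp hz) 2
    have : ε / ρ ^ 2 * normSq z ≤ ε := by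
      rw [div_mul_eq_mul_div, div_le_iff₀ (by positivity)]
      exact mul_le_mul_of_nonneg_left this hε.le
    simp only [b]
    linarith
  have hcw : ∀ z, 0 ≤ c * slitBarrier δ z := fun z ↦ mul_nonneg hc (slitBarrier_nonneg δ z)
  have hmax := le_of_forall_mem_sdiff_le (b := b) (isCompact_closedBall 0 ρ)
    (isOpen_ball.inter (isOpen_slitPlane.preimage (by fun_prop)))
    (Set.inter_subset_left.trans ball_subset_closedBall)
    husc (by simp only [b]; have := continuous_slitBarrier δ; fun_prop : Continuous b).continuousOn
    (fun z hz ↦ hsub z hz.1)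
    (fun z hz ↦ eventually_circleAverage_slitBarrier_lt (by positivity) hz.2)
    (fun z hz ↦ by linarith [hb_ge z (ball_subset_closedBall hz.1), hcw z, hε])
    ?_ 0 (mem_closedBall_self hρ.le)
  · simpa [b, slitBarrier_apply_zero] using hmax
  rintro z ⟨hzK, hzU⟩
  by_cases hz : z ∈ ball 0 ρ
  · have hslit : δ ≤ z.re ∧ z.im = 0 := by
      simpa [mem_slitPlane_iff, not_or] using fun h ↦ hzU ⟨hz, h⟩
    have hzt : z = (z.re : ℂ) := ext rfl (by simpa using hslit.2)
    have := hseg z.re ⟨hslit.1, (re_le_norm z).trans (mem_closedBall_zero_iff.mp hzK)⟩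
    rw [← hzt] at this
    linarith [hb_ge z hzK, hcw z, hε]
  · linarith [hb_ge z hzK, hsphere z (closedBall_sdiff_ball (x := (0 : ℂ)) ▸ ⟨hzK, hz⟩)]

theorem exists_forall_sphere_le_slitBarrier {h : ℂ → ℝ} {ρ ε : ℝ} (hρ : 0 < ρ) (hε : 0 < ε)
    (husc : UpperSemicontinuousOn h (sphere 0 ρ)) (hρ0 : h ρ ≤ 0) :
    ∃ c ≥ 0, ∀ δ ≥ 0, ∀ z ∈ sphere (0 : ℂ) ρ, h z ≤ ε + c * slitBarrier δ z := by
  have hρS : (ρ : ℂ) ∈ sphere (0 : ℂ) ρ := by simp [hρ.le]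
  obtain ⟨zM, -, hM⟩ := husc.exists_isMaxOn ⟨_, hρS⟩ (isCompact_sphere _ _)
  obtain ⟨β, hβ, hβε⟩ := mem_nhdsWithin_iff.mp (husc ρ hρS ε (hρ0.trans_lt hε))
  have hσ : 0 < β / (2 * √ρ) := by positivity
  refine ⟨max (h zM) 0 / (β / (2 * √ρ)), by positivity, fun δ hδ z hz ↦ ?_⟩
  have hcw : 0 ≤ max (h zM) 0 / (β / (2 * √ρ)) * slitBarrier δ z :=
    mul_nonneg (by positivity) (slitBarrier_nonneg δ z)
  by_cases hzβ : ‖z - ρ‖ < β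
  · have : h z < ε := hβε ⟨mem_ball_iff_norm.mpr hzβ, hz⟩
    linarith
  · have hσw : β / (2 * √ρ) ≤ slitBarrier δ z :=
      (div_le_div_of_nonneg_right (not_lt.mp hzβ) (by positivity)).trans
        (norm_sub_div_le_slitBarrier hδ (mem_sphere_zero_iff_norm.mp hz))
    have : max (h zM) 0 ≤ max (h zM) 0 / (β / (2 * √ρ)) * slitBarrier δ z :=
      calc max (h zM) 0 = max (h zM) 0 / (β / (2 * √ρ)) * (β / (2 * √ρ)) :=
            (div_mul_cancel₀ _ hσ.ne').symm
        _ ≤ _ := mul_le_mul_of_nonneg_left hσw (by positivity)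
    linarith [le_max_left (h zM) 0, isMaxOn_iff.mp hM z hz]

theorem le_zero_of_le_zero_on_radius {h : ℂ → ℝ} {ρ : ℝ} (hρ : 0 < ρ)
    (husc : UpperSemicontinuousOn h (closedBall 0 ρ))
    (hsub : ∀ z ∈ ball (0 : ℂ) ρ, ∀ᶠ r in 𝓝[>] 0, h z ≤ circleAverage h z r)
    (hseg : ∀ t ∈ Set.Ioc 0 ρ, h t ≤ 0) : h 0 ≤ 0 := by
  refine le_of_forall_pos_le_add fun ε hε ↦ ?_
  obtain ⟨c, hc, hsphere⟩ := exists_forall_sphere_le_slitBarrier hρ (half_pos hε)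
    (husc.mono sphere_subset_closedBall) (hseg ρ ⟨hρ, le_rfl⟩)
  have hδ : ∀ δ > 0, h 0 ≤ ε + c * √δ := fun δ hδ ↦ by
    have := le_of_forall_sphere_le_slitBarrier hρ (half_pos hε) hc husc hsub
      (fun t ht ↦ hseg t ⟨hδ.trans_le ht.1, ht.2⟩) (hsphere δ hδ.le)
    linarith
  have hlim : Tendsto (fun δ ↦ ε + c * √δ) (𝓝[>] 0) (𝓝 (0 + ε)) :=
    ((by fun_prop : Continuous fun δ ↦ ε + c * √δ).tendsto' 0 _ (by simp)).mono_left
      nhdsWithin_le_nhds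
  exact ge_of_tendsto hlim (eventually_nhdsWithin_of_forall hδ)

theorem SubharmonicOn.eventually_le_circleAverage {h : ℂ → ℝ} {s : Set ℂ}
    (hh : SubharmonicOn h s) {z : ℂ} (hz : z ∈ s) :
    ∀ᶠ r in 𝓝[>] 0, h z ≤ circleAverage h z r :=
  hh.2 z hz

/-- If `h` is subharmonic on the open unit disk and `h ≤ 0` on the real segment `(0,1)`,
then `h(0) ≤ 0`. -/
theorem subharmonic_le_zero_of_le_zero_on_segment
    (h : ℂ → ℝ) (hsub : SubharmonicOn h (ball (0 : ℂ) 1))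
    (hseg : ∀ t ∈ Set.Ioo (0 : ℝ) 1, h (Complex.ofReal t) ≤ 0) :
    h 0 ≤ 0 :=
  le_zero_of_le_zero_on_radius (ρ := 1 / 2) (by norm_num)
    (hsub.1.mono (closedBall_subset_ball (by norm_num)))
    (fun z hz ↦ hsub.eventually_le_circleAverage (ball_subset_ball (by norm_num) hz))
    (fun t ht ↦ hseg t ⟨ht.1, by linarith [ht.2]⟩)
end
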